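/- arXiv:1611.02741 — 7 statements merged into one kernel-verified Lean document; each statement's English description precedes it below -/
import Mathlib

section
/- Let f : C → ℝ be convex on a convex set C in a real vector space, let x₁,…,xₙ ∈ C, and let p, q be probability weight vectors with qᵢ > 0 for each i. Then max_i (pᵢ/qᵢ) · J(f,x,q) ≥ J(f,x,p) ≥ min_i (pᵢ/qᵢ) · J(f,x,q), where J(f,x,r) = Σ rᵢ f(xᵢ) − f(Σ rᵢ xᵢ). -/
/-!
If `a • u ≤ w` for probability weights `u, w` and `a ≥ 0`, then `w` is the mixture of `u` with
weight `a` and of the nonnegative remainder `w - a • u`; applying Jensen's inequality to the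
point `∑ uᵢ xᵢ` together with the `xᵢ` gives `a · J(f,x,u) ≤ J(f,x,w)`. With `w = p`, `u = q`,
`a = min pᵢ/qᵢ` this is the lower bound; with `w = q`, `u = p`, `a = (max pᵢ/qᵢ)⁻¹` the upper one.
-/

section

open Finset

variable {E ι : Type*} [AddCommGroup E] [Module ℝ E] [Fintype ι] {C : Set E} {f : E → ℝ}

def jensenGap (f : E → ℝ) (x : ι → E) (w : ι → ℝ) : ℝ :=
  ∑ i, w i * f (x i) - f (∑ i, w i • x i)

theorem ConvexOn.map_smul_add_sum_le (hf : ConvexOn ℝ C f) {y : E} (hy : y ∈ C)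
    {x : ι → E} (hx : ∀ i, x i ∈ C) {a : ℝ} {b : ι → ℝ} (ha : 0 ≤ a) (hb : ∀ i, 0 ≤ b i)
    (hab : a + ∑ i, b i = 1) :
    f (a • y + ∑ i, b i • x i) ≤ a * f y + ∑ i, b i * f (x i) := by
  have h := hf.map_sum_le (t := univ) (w := fun o : Option ι => o.elim a b)
    (p := fun o => o.elim y x) (by rintro (_ | i) _ <;> simp [ha, hb])
    (by simpa [Fintype.sum_option] using hab) (by rintro (_ | i) _ <;> simp [hy, hx])
  simpa [Fintype.sum_option] using h

theorem ConvexOn.smul_jensenGap_le (hf : ConvexOn ℝ C f) {x : ι → E} (hx : ∀ i, x i ∈ C)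
    {u w : ι → ℝ} (hu : ∀ i, 0 ≤ u i) (hu1 : ∑ i, u i = 1) (hw1 : ∑ i, w i = 1)
    {a : ℝ} (ha : 0 ≤ a) (hau : ∀ i, a * u i ≤ w i) :
    a * jensenGap f x u ≤ jensenGap f x w := by
  have hmix : a • ∑ i, u i • x i + ∑ i, (w i - a * u i) • x i = ∑ i, w i • x i := by
    simp only [smul_sum, smul_smul, ← sum_add_distrib, ← add_smul, add_sub_cancel]
  have hrest : a + ∑ i, (w i - a * u i) = 1 := by
    rw [sum_sub_distrib, ← mul_sum, hu1, hw1]; ring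
  have hJensen := hf.map_smul_add_sum_le (hf.1.sum_mem (fun i _ => hu i) hu1 fun i _ => hx i)
    hx ha (fun i => sub_nonneg.2 (hau i)) hrest
  rw [hmix] at hJensen
  have hsplit : ∑ i, (w i - a * u i) * f (x i) = ∑ i, w i * f (x i) - a * ∑ i, u i * f (x i) := by
    simp only [sub_mul, sum_sub_distrib, mul_sum, mul_assoc]
  unfold jensenGap
  linarith

theorem ConvexOn.jensenGap_le_mul (hf : ConvexOn ℝ C f) {x : ι → E} (hx : ∀ i, x i ∈ C)
    {p q : ι → ℝ} (hp : ∀ i, 0 ≤ p i) (hp1 : ∑ i, p i = 1) (hq1 : ∑ i, q i = 1)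
    {M : ℝ} (hM : ∀ i, p i ≤ M * q i) :
    jensenGap f x p ≤ M * jensenGap f x q := by
  have hM1 : 1 ≤ M := by
    simpa [hp1, ← mul_sum, hq1] using sum_le_sum fun i (_ : i ∈ univ) => hM i
  have hM0 : 0 < M := by linarith
  have h := hf.smul_jensenGap_le hx hp hp1 hq1 (inv_nonneg.2 hM0.le) fun i => by
    rw [inv_mul_le_iff₀ hM0]; exact hM i
  rwa [inv_mul_le_iff₀ hM0] at h
end

theorem stmt_2_general {E : Type*} [AddCommGroup E] [Module ℝ E] {C : Set E} {f : E → ℝ}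
    (hf : ConvexOn ℝ C f) {n : ℕ} (hn : 0 < n)
    (x : Fin n → E) (hx : ∀ i, x i ∈ C)
    (p q : Fin n → ℝ) (hp : ∀ i, 0 ≤ p i) (hq : ∀ i, 0 < q i)
    (hp1 : ∑ i, p i = 1) (hq1 : ∑ i, q i = 1) :
    (⨆ i, p i / q i) * (∑ i, q i * f (x i) - f (∑ i, q i • x i)) ≥
        ∑ i, p i * f (x i) - f (∑ i, p i • x i) ∧
      ∑ i, p i * f (x i) - f (∑ i, p i • x i) ≥
        (⨅ i, p i / q i) * (∑ i, q i * f (x i) - f (∑ i, q i • x i)) := by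
  have : Nonempty (Fin n) := ⟨⟨0, hn⟩⟩
  have hle_sup : ∀ i, p i ≤ (⨆ j, p j / q j) * q i := fun i =>
    (div_le_iff₀ (hq i)).1 (le_ciSup (Set.finite_range fun j => p j / q j).bddAbove i)
  have hinf_le : ∀ i, (⨅ j, p j / q j) * q i ≤ p i := fun i =>
    (le_div_iff₀ (hq i)).1 (ciInf_le (Set.finite_range fun j => p j / q j).bddBelow i)
  have hinf_nonneg : 0 ≤ ⨅ i, p i / q i := le_ciInf fun i => div_nonneg (hp i) (hq i).le
  exact ⟨hf.jensenGap_le_mul hx hp hp1 hq1 hle_sup,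
    hf.smul_jensenGap_le hx (fun i => (hq i).le) hq1 hp1 hinf_nonneg hinf_le⟩

theorem stmt_2 {E : Type*} [AddCommGroup E] [Module ℝ E] {C : Set E} {f : E → ℝ}
    (hC : Convex ℝ C) (hf : ConvexOn ℝ C f) {n : ℕ} (hn : 0 < n)
    (x : Fin n → E) (hx : ∀ i, x i ∈ C)
    (p q : Fin n → ℝ) (hp : ∀ i, 0 ≤ p i) (hq : ∀ i, 0 < q i)
    (hp1 : ∑ i, p i = 1) (hq1 : ∑ i, q i = 1) :
    (⨆ i, p i / q i) * (∑ i, q i * f (x i) - f (∑ i, q i • x i)) ≥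
        ∑ i, p i * f (x i) - f (∑ i, p i • x i) ∧
      ∑ i, p i * f (x i) - f (∑ i, p i • x i) ≥
        (⨅ i, p i / q i) * (∑ i, q i * f (x i) - f (∑ i, q i • x i)) :=
  stmt_2_general hf hn x hx p q hp hq hp1 hq1
end

section
/- Let f : C → ℝ be convex on a convex set C, let x, y ∈ C, p ∈ [0,1], q ∈ (0,1). Then max{p/q, (1-p)/(1-q)} · [(1-q)f(x) + q f(y) − f((1-q)x + qy)] ≥ (1-p)f(x) + p f(y) − f((1-p)x + py) ≥ min{p/q, (1-p)/(1-q)} · [(1-q)f(x) + q f(y) − f((1-q)x + qy)]. -/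
private lemma aux {E : Type*} [AddCommGroup E] [Module ℝ E] {C : Set E} {f : E → ℝ}
    (hf : ConvexOn ℝ C f) {x y : E} (hx : x ∈ C) (hy : y ∈ C)
    {p q : ℝ} (hp0 : 0 ≤ p) (hpq : p ≤ q) (hq1 : q ≤ 1) (hq0 : 0 < q) :
    (1 - p) * f x + p * f y - f ((1 - p) • x + p • y) ≥
      (p / q) * ((1 - q) * f x + q * f y - f ((1 - q) • x + q • y)) := by
  have hz : (1 - q) • x + q • y ∈ C := hf.1 hx hy (by linarith) (by linarith) (by ring)
  have hr0 : 0 ≤ p / q := div_nonneg hp0 hq0.le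
  have hr1 : p / q ≤ 1 := (div_le_one hq0).2 hpq
  have h1 := hf.2 hx hz (by linarith : (0:ℝ) ≤ 1 - p / q) hr0 (by ring)
  have heq : (1 - p / q) • x + (p / q) • ((1 - q) • x + q • y) = (1 - p) • x + p • y := by
    match_scalars <;> field_simp <;> ring
  rw [heq] at h1
  have hexp : (p / q) * ((1 - q) * f x + q * f y - f ((1 - q) • x + q • y)) =
      (p / q - p) * f x + p * f y - (p / q) * f ((1 - q) • x + q • y) := by
    field_simp
  rw [hexp]
  simp only [smul_eq_mul] at h1
  linarith

private lemma aux2 {E : Type*} [AddCommGroup E] [Module ℝ E] {C : Set E} {f : E → ℝ}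
    (hf : ConvexOn ℝ C f) {x y : E} (hx : x ∈ C) (hy : y ∈ C)
    {p q : ℝ} (hp0 : 0 ≤ p) (hpq : p ≤ q) (hq1 : q < 1) (hp1 : p < 1) :
    ((1 - p) / (1 - q)) * ((1 - q) * f x + q * f y - f ((1 - q) • x + q • y)) ≥
      (1 - p) * f x + p * f y - f ((1 - p) • x + p • y) := by
  have h := aux hf hy hx (p := 1 - q) (q := 1 - p)
    (by linarith) (by linarith) (by linarith) (by linarith)
  have e1 : (1 - (1 - q)) • y + (1 - q) • x = (1 - q) • x + q • y := by module
  have e2 : (1 - (1 - p)) • y + (1 - p) • x = (1 - p) • x + p • y := by module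
  rw [e1, e2] at h
  -- h : (1-q) stuff ≥ ((1-q)/(1-p)) * ((1-p) stuff)
  set Jq := (1 - q) * f x + q * f y - f ((1 - q) • x + q • y) with hJq
  set Jp := (1 - p) * f x + p * f y - f ((1 - p) • x + p • y) with hJp
  have h' : Jq ≥ ((1 - q) / (1 - p)) * Jp := by
    have : (1 - (1 - q)) * f y + (1 - q) * f x - f ((1 - q) • x + q • y) = Jq := by
      rw [hJq]; ring
    have e3 : (1 - (1 - p)) * f y + (1 - p) * f x - f ((1 - p) • x + p • y) = Jp := by
      rw [hJp]; ring
    rw [this, e3] at h; exact h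
  have hk0 : 0 ≤ (1 - p) / (1 - q) := div_nonneg (by linarith) (by linarith)
  have key := mul_le_mul_of_nonneg_left h' hk0
  have hone : ((1 - p) / (1 - q)) * ((1 - q) / (1 - p)) = 1 := by
    rw [div_mul_div_comm, mul_comm (1 - p) (1 - q),
      div_self (ne_of_gt (mul_pos (by linarith) (by linarith)))]
  calc ((1 - p) / (1 - q)) * Jq ≥ ((1 - p) / (1 - q)) * (((1 - q) / (1 - p)) * Jp) := key
    _ = Jp := by rw [← mul_assoc, hone, one_mul]

theorem stmt_3 {E : Type*} [AddCommGroup E] [Module ℝ E] {C : Set E} {f : E → ℝ}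
    (hf : ConvexOn ℝ C f) {x y : E} (hx : x ∈ C) (hy : y ∈ C)
    {p q : ℝ} (hp : p ∈ Set.Icc (0:ℝ) 1) (hq : q ∈ Set.Ioo (0:ℝ) 1) :
    max (p / q) ((1 - p) / (1 - q)) *
        ((1 - q) * f x + q * f y - f ((1 - q) • x + q • y)) ≥
      (1 - p) * f x + p * f y - f ((1 - p) • x + p • y) ∧
    (1 - p) * f x + p * f y - f ((1 - p) • x + p • y) ≥
      min (p / q) ((1 - p) / (1 - q)) *
        ((1 - q) * f x + q * f y - f ((1 - q) • x + q • y)) := by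
  obtain ⟨hp0, hp1⟩ := hp
  obtain ⟨hq0, hq1⟩ := hq
  rcases le_total p q with hpq | hqp
  · -- p ≤ q : min = p/q, max = (1-p)/(1-q)
    have hle : p / q ≤ (1 - p) / (1 - q) := by
      rw [div_le_div_iff₀ hq0 (by linarith)]; nlinarith
    rw [max_eq_right hle, min_eq_left hle]
    exact ⟨aux2 hf hx hy hp0 hpq hq1 (by linarith),
      aux hf hx hy hp0 hpq hq1.le hq0⟩
  · -- q ≤ p : min = (1-p)/(1-q), max = p/q
    have hle : (1 - p) / (1 - q) ≤ p / q := by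
      rw [div_le_div_iff₀ (by linarith) hq0]; nlinarith
    rw [max_eq_left hle, min_eq_right hle]
    have e1 : (1 - (1 - q)) • y + (1 - q) • x = (1 - q) • x + q • y := by module
    have e2 : (1 - (1 - p)) • y + (1 - p) • x = (1 - p) • x + p • y := by module
    constructor
    · have h := aux2 hf hy hx (p := 1 - p) (q := 1 - q)
        (by linarith) (by linarith) (by linarith) (by linarith)
      rw [e1, e2] at h
      have r1 : (1 - (1 - p)) / (1 - (1 - q)) = p / q := by norm_num
      rw [r1] at h
      calc p / q * ((1 - q) * f x + q * f y - f ((1 - q) • x + q • y))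
          = p / q * ((1 - (1 - q)) * f y + (1 - q) * f x - f ((1 - q) • x + q • y)) := by
            ring_nf
        _ ≥ (1 - (1 - p)) * f y + (1 - p) * f x - f ((1 - p) • x + p • y) := h
        _ = (1 - p) * f x + p * f y - f ((1 - p) • x + p • y) := by ring
    · have h := aux hf hy hx (p := 1 - p) (q := 1 - q)
        (by linarith) (by linarith) (by linarith) (by linarith)
      rw [e1, e2] at h
      have r1 : (1 - p) / (1 - q) = (1 - p) / (1 - q) := rfl
      calc (1 - p) * f x + p * f y - f ((1 - p) • x + p • y)
          = (1 - (1 - p)) * f y + (1 - p) * f x - f ((1 - p) • x + p • y) := by ring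
        _ ≥ (1 - p) / (1 - q) * ((1 - (1 - q)) * f y + (1 - q) * f x - f ((1 - q) • x + q • y)) := h
        _ = (1 - p) / (1 - q) * ((1 - q) * f x + q * f y - f ((1 - q) • x + q • y)) := by ring_nf
end

section
/- Let f : C → ℝ be convex on a convex set C, let x, y ∈ C, and t ∈ [0,1]. Then 2·max{t, 1-t} · [(f(x)+f(y))/2 − f((x+y)/2)] ≥ (1-t)f(x) + t f(y) − f((1-t)x + ty) ≥ 2·min{t, 1-t} · [(f(x)+f(y))/2 − f((x+y)/2)]. -/
private lemma aux_half {E : Type*} [AddCommGroup E] [Module ℝ E] {C : Set E} {f : E → ℝ}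
    (hf : ConvexOn ℝ C f) {x y : E} (hx : x ∈ C) (hy : y ∈ C)
    {t : ℝ} (ht0 : 0 ≤ t) (ht2 : t ≤ 1/2) :
    2 * (1 - t) * ((f x + f y) / 2 - f ((2:ℝ)⁻¹ • (x + y))) ≥
      (1 - t) * f x + t * f y - f ((1 - t) • x + t • y) ∧
    (1 - t) * f x + t * f y - f ((1 - t) • x + t • y) ≥
      2 * t * ((f x + f y) / 2 - f ((2:ℝ)⁻¹ • (x + y))) := by
  have hm : (2:ℝ)⁻¹ • (x + y) = (2:ℝ)⁻¹ • x + (2:ℝ)⁻¹ • y := smul_add _ _ _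
  have hmem : (2:ℝ)⁻¹ • x + (2:ℝ)⁻¹ • y ∈ C :=
    hf.1 hx hy (by norm_num) (by norm_num) (by norm_num)
  have hA : f ((1 - t) • x + t • y) ≤ (1 - 2*t) * f x + (2*t) * f ((2:ℝ)⁻¹ • (x + y)) := by
    have key := hf.2 hx hmem (show (0:ℝ) ≤ 1 - 2*t by linarith) (show (0:ℝ) ≤ 2*t by linarith)
      (show (1 - 2*t) + 2*t = 1 by ring)
    have heq : (1 - 2*t) • x + (2*t) • ((2:ℝ)⁻¹ • x + (2:ℝ)⁻¹ • y) = (1 - t) • x + t • y := by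
      match_scalars <;> ring
    rw [heq] at key
    simpa [hm, smul_eq_mul] using key
  have hz : (1 - t) • x + t • y ∈ C := hf.1 hx hy (by linarith) ht0 (by ring)
  have h1t : (0:ℝ) < 1 - t := by linarith
  have hB : 2 * (1 - t) * f ((2:ℝ)⁻¹ • (x + y)) ≤
      f ((1 - t) • x + t • y) + (1 - 2*t) * f y := by
    have key := hf.2 hz hy (show (0:ℝ) ≤ (2 * (1 - t))⁻¹ from le_of_lt (by positivity))
      (show (0:ℝ) ≤ (1 - 2*t) / (2 * (1 - t)) from div_nonneg (by linarith) (by linarith))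
      (show (2 * (1 - t))⁻¹ + (1 - 2*t) / (2 * (1 - t)) = 1 by field_simp; ring)
    have heq : (2 * (1 - t))⁻¹ • ((1 - t) • x + t • y) + ((1 - 2*t) / (2 * (1 - t))) • y
        = (2:ℝ)⁻¹ • (x + y) := by
      match_scalars <;> field_simp <;> ring
    rw [heq] at key
    have h2 := mul_le_mul_of_nonneg_left key (by positivity : (0:ℝ) ≤ 2 * (1 - t))
    have hne : (2 * (1 - t)) ≠ 0 := by positivity
    calc 2 * (1 - t) * f ((2:ℝ)⁻¹ • (x + y))
        ≤ 2 * (1 - t) * ((2 * (1 - t))⁻¹ • f ((1 - t) • x + t • y)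
            + ((1 - 2*t) / (2 * (1 - t))) • f y) := h2
      _ = f ((1 - t) • x + t • y) + (1 - 2*t) * f y := by
          simp only [smul_eq_mul]; field_simp
  exact ⟨by linarith, by linarith⟩

theorem stmt_4 {E : Type*} [AddCommGroup E] [Module ℝ E] {C : Set E} {f : E → ℝ}
    (hf : ConvexOn ℝ C f) {x y : E} (hx : x ∈ C) (hy : y ∈ C)
    {t : ℝ} (ht : t ∈ Set.Icc (0:ℝ) 1) :
    2 * max t (1 - t) * ((f x + f y) / 2 - f ((2:ℝ)⁻¹ • (x + y))) ≥
      (1 - t) * f x + t * f y - f ((1 - t) • x + t • y) ∧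
    (1 - t) * f x + t * f y - f ((1 - t) • x + t • y) ≥
      2 * min t (1 - t) * ((f x + f y) / 2 - f ((2:ℝ)⁻¹ • (x + y))) := by
  obtain ⟨ht0, ht1⟩ := ht
  rcases le_or_gt t (1/2) with h | h
  · have := aux_half hf hx hy ht0 h
    rw [max_eq_right (by linarith), min_eq_left (by linarith)]
    exact this
  · have h2 : 1 - t ≤ 1/2 := by linarith
    have key := aux_half hf hy hx (t := 1 - t) (by linarith) h2
    rw [show (1:ℝ) - (1 - t) = t from by ring,
        show (2:ℝ)⁻¹ • (y + x) = (2:ℝ)⁻¹ • (x + y) from by rw [add_comm],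
        show t • y + (1 - t) • x = (1 - t) • x + t • y from add_comm _ _] at key
    rw [max_eq_left (by linarith), min_eq_right (by linarith)]
    exact ⟨by linarith [key.2], by linarith [key.1]⟩
end

section
/- For all positive reals a, b, all p ∈ [0,1], and any nonzero real α: max{p, 1-p}·(b^(α/2) − a^(α/2))² ≥ (1-p)a^α + p b^α − (a^(1-p) b^p)^α ≥ min{p, 1-p}·(b^(α/2) − a^(α/2))². -/
open Real

lemma cf_core (s t p : ℝ) (hs : 0 < s) (ht : 0 < t) (hp0 : 0 ≤ p) (hp1 : p ≤ 1) :
    min p (1 - p) * (Real.sqrt t - Real.sqrt s) ^ 2 ≤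
      (1 - p) * s + p * t - s ^ (1 - p) * t ^ p ∧
    (1 - p) * s + p * t - s ^ (1 - p) * t ^ p ≤
      max p (1 - p) * (Real.sqrt t - Real.sqrt s) ^ 2 := by
  have hst : Real.sqrt (s * t) = Real.sqrt s * Real.sqrt t := Real.sqrt_mul hs.le t
  have hsq : (Real.sqrt t - Real.sqrt s) ^ 2 = s + t - 2 * Real.sqrt (s * t) := by
    rw [sub_sq, Real.sq_sqrt hs.le, Real.sq_sqrt ht.le, hst]; ring
  constructor
  · set m := min p (1 - p) with hm
    have hm0 : 0 ≤ m := le_min hp0 (by linarith)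
    have hmp : m ≤ p := min_le_left _ _
    have hm1p : m ≤ 1 - p := min_le_right _ _
    have h := Real.geom_mean_le_arith_mean3_weighted
      (w₁ := 1 - p - m) (w₂ := p - m) (w₃ := 2 * m)
      (p₁ := s) (p₂ := t) (p₃ := Real.sqrt (s * t))
      (by linarith) (by linarith) (by linarith) hs.le ht.le (Real.sqrt_nonneg _)
      (by ring)
    have hgm : s ^ (1 - p - m) * t ^ (p - m) * Real.sqrt (s * t) ^ (2 * m)
        = s ^ (1 - p) * t ^ p := by
      rw [Real.sqrt_eq_rpow, ← Real.rpow_mul (by positivity),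
        Real.mul_rpow hs.le ht.le, mul_mul_mul_comm,
        ← Real.rpow_add hs, ← Real.rpow_add ht]
      rw [show 1 - p - m + 1 / 2 * (2 * m) = 1 - p by ring,
        show p - m + 1 / 2 * (2 * m) = p by ring]
    rw [hgm] at h
    rw [hsq]
    nlinarith [Real.sqrt_nonneg (s * t)]
  · set M := max p (1 - p) with hM
    have hMp : p ≤ M := le_max_left _ _
    have hM1p : 1 - p ≤ M := le_max_right _ _
    have hM0 : 0 < M := by
      rcases le_total p (1 - p) with h | h
      · rw [hM, max_eq_right h]; linarith
      · rw [hM, max_eq_left h]; linarith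
    have h := Real.geom_mean_le_arith_mean3_weighted
      (w₁ := 1 / (2 * M)) (w₂ := (M - p) / (2 * M)) (w₃ := (M - 1 + p) / (2 * M))
      (p₁ := s ^ (1 - p) * t ^ p) (p₂ := t) (p₃ := s)
      (by positivity) (div_nonneg (by linarith) (by positivity))
      (div_nonneg (by linarith) (by positivity))
      (by positivity) ht.le hs.le
      (by field_simp; ring)
    have hgm : (s ^ (1 - p) * t ^ p) ^ (1 / (2 * M)) * t ^ ((M - p) / (2 * M))
        * s ^ ((M - 1 + p) / (2 * M)) = Real.sqrt (s * t) := by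
      rw [Real.sqrt_eq_rpow, Real.mul_rpow hs.le ht.le,
        Real.mul_rpow (by positivity) (by positivity),
        ← Real.rpow_mul hs.le, ← Real.rpow_mul ht.le]
      have e1 : (1 - p) * (1 / (2 * M)) + (M - 1 + p) / (2 * M) = 1 / 2 := by
        field_simp; ring
      have e2 : p * (1 / (2 * M)) + (M - p) / (2 * M) = 1 / 2 := by
        field_simp; ring
      calc s ^ ((1 - p) * (1 / (2 * M))) * t ^ (p * (1 / (2 * M)))
            * t ^ ((M - p) / (2 * M)) * s ^ ((M - 1 + p) / (2 * M))
          = (s ^ ((1 - p) * (1 / (2 * M))) * s ^ ((M - 1 + p) / (2 * M)))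
            * (t ^ (p * (1 / (2 * M))) * t ^ ((M - p) / (2 * M))) := by ring
        _ = s ^ ((1 - p) * (1 / (2 * M)) + (M - 1 + p) / (2 * M))
            * t ^ (p * (1 / (2 * M)) + (M - p) / (2 * M)) := by
            rw [← Real.rpow_add hs, ← Real.rpow_add ht]
        _ = s ^ ((1:ℝ) / 2) * t ^ ((1:ℝ) / 2) := by rw [e1, e2]
    rw [hgm] at h
    have h2 : 2 * M * Real.sqrt (s * t)
        ≤ s ^ (1 - p) * t ^ p + (M - p) * t + (M - 1 + p) * s := by
      have h3 := mul_le_mul_of_nonneg_left h (by positivity : (0:ℝ) ≤ 2 * M)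
      have e : 2 * M * (1 / (2 * M) * (s ^ (1 - p) * t ^ p)
          + (M - p) / (2 * M) * t + (M - 1 + p) / (2 * M) * s)
          = s ^ (1 - p) * t ^ p + (M - p) * t + (M - 1 + p) * s := by
        field_simp
      rw [e] at h3; linarith
    rw [hsq]
    linarith

theorem stmt_6 (a b p α : ℝ) (ha : 0 < a) (hb : 0 < b)
    (hp : p ∈ Set.Icc (0:ℝ) 1) (hα : α ≠ 0) :
    max p (1 - p) * (b ^ (α / 2) - a ^ (α / 2)) ^ 2 ≥
      (1 - p) * a ^ α + p * b ^ α - (a ^ (1 - p) * b ^ p) ^ α ∧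
    (1 - p) * a ^ α + p * b ^ α - (a ^ (1 - p) * b ^ p) ^ α ≥
      min p (1 - p) * (b ^ (α / 2) - a ^ (α / 2)) ^ 2 := by
  obtain ⟨hp0, hp1⟩ := hp
  have hsa : Real.sqrt (a ^ α) = a ^ (α / 2) := by
    rw [Real.sqrt_eq_rpow, ← Real.rpow_mul ha.le]; ring_nf
  have hsb : Real.sqrt (b ^ α) = b ^ (α / 2) := by
    rw [Real.sqrt_eq_rpow, ← Real.rpow_mul hb.le]; ring_nf
  have hab : (a ^ (1 - p) * b ^ p) ^ α = (a ^ α) ^ (1 - p) * (b ^ α) ^ p := by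
    rw [Real.mul_rpow (by positivity) (by positivity),
      ← Real.rpow_mul ha.le, ← Real.rpow_mul hb.le,
      ← Real.rpow_mul ha.le, ← Real.rpow_mul hb.le, mul_comm (1 - p) α, mul_comm p α]
  have h := cf_core (a ^ α) (b ^ α) p (Real.rpow_pos_of_pos ha α)
    (Real.rpow_pos_of_pos hb α) hp0 hp1
  rw [hsa, hsb, ← hab] at h
  exact ⟨h.2, h.1⟩
end

section
/- For all positive reals a, b and p ∈ [0,1]: max{p, 1-p}·(√b − √a)² ≥ (1-p)a + pb − a^(1-p)b^p ≥ min{p, 1-p}·(√b − √a)². -/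
open Real

lemma aux_7 (a b p : ℝ) (ha : 0 < a) (hb : 0 < b) (hp0 : 0 ≤ p) (hp2 : p ≤ 1/2) :
    (1 - p) * (Real.sqrt b - Real.sqrt a) ^ 2 ≥
      (1 - p) * a + p * b - a ^ (1 - p) * b ^ p ∧
    (1 - p) * a + p * b - a ^ (1 - p) * b ^ p ≥
      p * (Real.sqrt b - Real.sqrt a) ^ 2 := by
  have hp1 : 0 < 1 - p := by linarith
  have hab : 0 < a * b := mul_pos ha hb
  set s : ℝ := (a * b) ^ ((1:ℝ)/2) with hsdef
  have hs0 : 0 ≤ s := Real.rpow_nonneg hab.le _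
  have hsq : (Real.sqrt b - Real.sqrt a) ^ 2 = a + b - 2 * s := by
    have h1 : (Real.sqrt b - Real.sqrt a) ^ 2
        = Real.sqrt b ^ 2 + Real.sqrt a ^ 2 - 2 * (Real.sqrt a * Real.sqrt b) := by ring
    rw [h1, Real.sq_sqrt ha.le, Real.sq_sqrt hb.le]
    have h2 : Real.sqrt a * Real.sqrt b = s := by
      rw [← Real.sqrt_mul ha.le, Real.sqrt_eq_rpow, hsdef]
    rw [h2]; ring
  set X : ℝ := a ^ (1 - p) * b ^ p with hX
  have hX0 : 0 ≤ X := mul_nonneg (Real.rpow_nonneg ha.le _) (Real.rpow_nonneg hb.le _)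
  -- Lower bound: X ≤ (1-2p)a + 2p s
  have key1 : X ≤ (1 - 2*p) * a + (2*p) * s := by
    have h := Real.geom_mean_le_arith_mean2_weighted
      (by linarith : (0:ℝ) ≤ 1 - 2*p) (by linarith : (0:ℝ) ≤ 2*p)
      ha.le hs0 (by ring)
    have e1 : s ^ (2*p) = a ^ p * b ^ p := by
      rw [hsdef, ← Real.rpow_mul hab.le, show (1:ℝ)/2 * (2*p) = p by ring,
        Real.mul_rpow ha.le hb.le]
    have heq : a ^ (1 - 2*p) * s ^ (2*p) = X := by
      rw [e1, ← mul_assoc, ← Real.rpow_add ha, show 1 - 2*p + p = 1 - p by ring]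
    linarith [heq ▸ h]
  -- Upper bound: 2(1-p) s ≤ X + (1-2p) b
  have key2 : 2*(1-p) * s ≤ X + (1 - 2*p) * b := by
    set w : ℝ := 1 / (2*(1-p)) with hw
    have hw0 : 0 ≤ w := by positivity
    have hw1 : 2*(1-p) * w = 1 := by rw [hw]; field_simp
    have hw2 : 0 ≤ 1 - w := by
      rw [hw]
      rw [sub_nonneg, div_le_one (by linarith)]
      linarith
    have h := Real.geom_mean_le_arith_mean2_weighted hw0 hw2 hX0 hb.le (by ring)
    have e2 : X ^ w * b ^ (1 - w) = s := by
      rw [hX, Real.mul_rpow (Real.rpow_nonneg ha.le _) (Real.rpow_nonneg hb.le _),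
        ← Real.rpow_mul ha.le, ← Real.rpow_mul hb.le, mul_assoc,
        ← Real.rpow_add hb]
      have hwp : (1-p) * w = 1/2 := by
        rw [hw]; field_simp
      have hwp2 : p * w + (1 - w) = 1/2 := by nlinarith [hwp]
      rw [hwp, hwp2, hsdef, Real.mul_rpow ha.le hb.le]
    rw [e2] at h
    have h2 := mul_le_mul_of_nonneg_left h (show (0:ℝ) ≤ 2*(1-p) by linarith)
    calc 2*(1-p) * s ≤ 2*(1-p) * (w * X + (1-w) * b) := h2
      _ = (2*(1-p)*w) * X + (2*(1-p) - 2*(1-p)*w) * b := by ring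
      _ = X + (1 - 2*p) * b := by rw [hw1]; ring
  rw [hsq]
  constructor <;> nlinarith [key1, key2]

theorem stmt_7 (a b p : ℝ) (ha : 0 < a) (hb : 0 < b) (hp : p ∈ Set.Icc (0:ℝ) 1) :
    max p (1 - p) * (Real.sqrt b - Real.sqrt a) ^ 2 ≥
      (1 - p) * a + p * b - a ^ (1 - p) * b ^ p ∧
    (1 - p) * a + p * b - a ^ (1 - p) * b ^ p ≥
      min p (1 - p) * (Real.sqrt b - Real.sqrt a) ^ 2 := by
  obtain ⟨hp0, hp1⟩ := hp
  rcases le_or_gt p (1/2) with h | h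
  · obtain ⟨h1, h2⟩ := aux_7 a b p ha hb hp0 h
    rw [max_eq_right (by linarith), min_eq_left (by linarith)]
    exact ⟨h1, h2⟩
  · obtain ⟨h1, h2⟩ := aux_7 b a (1-p) hb ha (by linarith) (by linarith)
    rw [show (1 - (1-p)) = p by ring] at h1 h2
    have e : (Real.sqrt a - Real.sqrt b)^2 = (Real.sqrt b - Real.sqrt a)^2 := by ring
    rw [e] at h1 h2
    have hc : b ^ p * a ^ (1-p) = a ^ (1-p) * b ^ p := mul_comm _ _
    rw [hc] at h1 h2
    rw [max_eq_left (by linarith), min_eq_right (by linarith)]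
    constructor <;> linarith
end

section
/- Let A, B be positive definite matrices (or positive invertible operators on a Hilbert space) and λ a real number. Then for any invertible D, (D A D*)^λ = D A^{1/2} (A^{1/2} |D|² A^{1/2})^{λ−1} A^{1/2} D*, where |D|² = D*D and real powers are defined via functional calculus. -/
open Matrix ComplexOrder

/-- Real power of a Hermitian matrix via the spectral theorem (functional calculus);
junk value `0` for non-Hermitian matrices. -/
noncomputable def Matrix.hrpow {n : ℕ} (A : Matrix (Fin n) (Fin n) ℂ) (r : ℝ) :
    Matrix (Fin n) (Fin n) ℂ :=
  if h : A.IsHermitian then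
    (h.eigenvectorUnitary : Matrix (Fin n) (Fin n) ℂ) *
      Matrix.diagonal (fun i => ((h.eigenvalues i ^ r : ℝ) : ℂ)) *
      (h.eigenvectorUnitary : Matrix (Fin n) (Fin n) ℂ)ᴴ
  else 0

/-- Weighted geometric mean `A #_ν B` of positive definite matrices:
`A^{1/2} (A^{-1/2} B A^{-1/2})^ν A^{1/2}`. -/
noncomputable def Matrix.gmean {n : ℕ} (A B : Matrix (Fin n) (Fin n) ℂ) (ν : ℝ) :
    Matrix (Fin n) (Fin n) ℂ :=
  A.hrpow (1/2) * ((A.hrpow (-(1/2)) * B * A.hrpow (-(1/2))).hrpow ν) * A.hrpow (1/2)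

/-- Quadratic weighted geometric mean `X ⓢ_ν Y = X* (|Y X⁻¹|²)^ν X`. -/
noncomputable def Matrix.qgmean {n : ℕ} (X Y : Matrix (Fin n) (Fin n) ℂ) (ν : ℝ) :
    Matrix (Fin n) (Fin n) ℂ :=
  Xᴴ * ((Y * X⁻¹)ᴴ * (Y * X⁻¹)).hrpow ν * X

/-!
Put `X = D A^{1/2}`, so that `D A Dᴴ = X Xᴴ` and `A^{1/2} Dᴴ D A^{1/2} = Xᴴ X =: B`. Since `X` is
invertible, `B` is positive definite and `W = X B^{-1/2}` is unitary with `X Xᴴ = W B Wᴴ`. Real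
powers commute with unitary conjugation, hence
`(X Xᴴ)^λ = W B^λ Wᴴ = X B^{-1/2} B^λ B^{-1/2} Xᴴ = X B^{λ-1} Xᴴ`.
-/

namespace Matrix

variable {n : ℕ} {A B X : Matrix (Fin n) (Fin n) ℂ}

lemma IsHermitian.hrpow_eq_cfc (hA : A.IsHermitian) (r : ℝ) :
    A.hrpow r = cfc (· ^ r : ℝ → ℝ) A := by
  rw [hrpow, dif_pos hA, hA.cfc_eq]
  rfl

lemma isHermitian_hrpow (A : Matrix (Fin n) (Fin n) ℂ) (r : ℝ) : (A.hrpow r).IsHermitian := by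
  by_cases hA : A.IsHermitian
  · rw [hA.hrpow_eq_cfc]
    exact cfc_predicate _ A
  · rw [hrpow, dif_neg hA]
    exact isHermitian_zero

lemma IsHermitian.hrpow_zero (hA : A.IsHermitian) : A.hrpow 0 = 1 := by
  simp only [hA.hrpow_eq_cfc, Real.rpow_zero]
  exact cfc_const_one ℝ A

lemma IsHermitian.hrpow_one (hA : A.IsHermitian) : A.hrpow 1 = A := by
  simp only [hA.hrpow_eq_cfc, Real.rpow_one]
  exact cfc_id' ℝ A

lemma PosDef.hrpow_mul_hrpow (hA : A.PosDef) (s t : ℝ) :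
    A.hrpow s * A.hrpow t = A.hrpow (s + t) := by
  have hA' := hA.isHermitian
  rw [hA'.hrpow_eq_cfc, hA'.hrpow_eq_cfc, hA'.hrpow_eq_cfc,
    ← cfc_mul _ _ A (A.finite_real_spectrum.continuousOn _) (A.finite_real_spectrum.continuousOn _)]
  refine cfc_congr fun x hx => ?_
  obtain ⟨i, rfl⟩ := hA'.spectrum_real_eq_range_eigenvalues ▸ hx
  exact (Real.rpow_add (hA.eigenvalues_pos i) s t).symm

lemma IsHermitian.hrpow_unitary_conj (hB : B.IsHermitian) {U : Matrix (Fin n) (Fin n) ℂ}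
    (hU : U ∈ unitaryGroup (Fin n) ℂ) (r : ℝ) :
    (U * B * star U).hrpow r = U * B.hrpow r * star U := by
  have hUBU : (U * B * star U).IsHermitian := isHermitian_mul_mul_conjTranspose U hB
  rw [hB.hrpow_eq_cfc, hUBU.hrpow_eq_cfc]
  have hconj : Continuous fun M : Matrix (Fin n) (Fin n) ℂ => U * M * star U := by fun_prop
  exact (StarAlgHomClass.map_cfc (S := ℝ) (Unitary.conjStarAlgAut ℝ _ ⟨U, hU⟩) _ B
    (B.finite_real_spectrum.continuousOn _) hconj hB hUBU).symm

lemma PosDef.isUnit_hrpow (hA : A.PosDef) (r : ℝ) : IsUnit (A.hrpow r) :=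
  .of_mul_eq_one (A.hrpow (-r)) <| by
    rw [hA.hrpow_mul_hrpow, add_neg_cancel, hA.isHermitian.hrpow_zero]

lemma hrpow_mul_conjTranspose_self (hX : IsUnit X) (r : ℝ) :
    (X * Xᴴ).hrpow r = X * (Xᴴ * X).hrpow (r - 1) * Xᴴ := by
  set B := Xᴴ * X
  have hB : B.PosDef := .conjTranspose_mul_self X (mulVec_injective_iff_isUnit.mpr hX)
  set T := B.hrpow (-(1 / 2))
  have hT : Tᴴ = T := isHermitian_hrpow B _
  have hTBT (s : ℝ) : T * B.hrpow s * T = B.hrpow (s - 1) := by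
    rw [hB.hrpow_mul_hrpow, hB.hrpow_mul_hrpow]; congr 1; ring
  set W := X * T
  have hWstar : star W = T * Xᴴ := by
    rw [star_eq_conjTranspose, conjTranspose_mul, hT]
  have hW : W ∈ unitaryGroup (Fin n) ℂ := by
    rw [mem_unitaryGroup_iff', hWstar]
    calc T * Xᴴ * (X * T) = T * B.hrpow 1 * T := by
          rw [hB.isHermitian.hrpow_one]; simp only [B, mul_assoc]
      _ = 1 := by rw [hTBT, sub_self, hB.isHermitian.hrpow_zero]
  have hXX : X * Xᴴ = W * B * star W := by
    calc X * Xᴴ = X * (T * B.hrpow 1 * T) * Xᴴ := by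
          rw [hTBT, sub_self, hB.isHermitian.hrpow_zero, mul_one]
      _ = W * B * star W := by
          rw [hB.isHermitian.hrpow_one, hWstar]; simp only [W, mul_assoc]
  calc (X * Xᴴ).hrpow r = W * B.hrpow r * star W := by
        rw [hXX, hB.isHermitian.hrpow_unitary_conj hW]
    _ = X * (T * B.hrpow r * T) * Xᴴ := by
        rw [hWstar]; simp only [W, mul_assoc]
    _ = X * B.hrpow (r - 1) * Xᴴ := by rw [hTBT]

end Matrix

theorem stmt_12 {n : ℕ} (A D : Matrix (Fin n) (Fin n) ℂ)
    (hA : A.PosDef) (hD : IsUnit D) (lam : ℝ) :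
    (D * A * Dᴴ).hrpow lam =
      D * A.hrpow (1/2) *
        ((A.hrpow (1/2) * (Dᴴ * D) * A.hrpow (1/2)).hrpow (lam - 1)) *
        A.hrpow (1/2) * Dᴴ := by
  set S := A.hrpow (1/2)
  have hS : Sᴴ = S := isHermitian_hrpow A _
  have hSS : S * S = A := by
    rw [hA.hrpow_mul_hrpow, add_halves, hA.isHermitian.hrpow_one]
  have hDA : D * A * Dᴴ = (D * S) * (D * S)ᴴ := by
    rw [conjTranspose_mul, hS, ← hSS]; simp only [mul_assoc]
  have hAD : (D * S)ᴴ * (D * S) = S * (Dᴴ * D) * S := by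
    rw [conjTranspose_mul, hS]; simp only [mul_assoc]
  rw [hDA, hrpow_mul_conjTranspose_self (hD.mul (hA.isUnit_hrpow _)), hAD, conjTranspose_mul, hS]
  simp only [S, mul_assoc]
end

section
/- Let X, Y be invertible matrices and ν ∈ [0,1]. Then (1−ν)|X|² + ν|Y|² ≥ X ⓢ_ν Y ≥ ((1−ν)|X|⁻² + ν|Y|⁻²)⁻¹ in the Loewner order. -/
open Matrix ComplexOrder

namespace Real

lemma rpow_le_one_sub_add_mul {ν x : ℝ} (h0 : 0 ≤ ν) (h1 : ν ≤ 1) (hx : 0 ≤ x) :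
    x ^ ν ≤ 1 - ν + ν * x := by
  have := rpow_one_add_le_one_add_mul_self (s := x - 1) (by linarith) h0 h1
  rwa [add_sub_cancel, mul_sub, mul_one, ← add_sub_assoc, add_sub_right_comm] at this

lemma inv_one_sub_add_mul_inv_le_rpow {ν x : ℝ} (h0 : 0 ≤ ν) (h1 : ν ≤ 1) (hx : 0 < x) :
    (1 - ν + ν * x⁻¹)⁻¹ ≤ x ^ ν := by
  have := rpow_le_one_sub_add_mul h0 h1 (inv_nonneg.2 hx.le)
  rw [inv_rpow hx.le] at this
  exact inv_le_of_inv_le₀ (rpow_pos_of_pos hx ν) this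

end Real

namespace Matrix

variable {m 𝕜 : Type*} [Fintype m] [DecidableEq m] [RCLike 𝕜]

lemma inv_diagonal_of_ne_zero {K : Type*} [Field K] {v : m → K} (hv : ∀ i, v i ≠ 0) :
    (diagonal v)⁻¹ = diagonal v⁻¹ :=
  inv_eq_left_inv <| by rw [diagonal_mul_diagonal, ← diagonal_one]; simp [hv]

def conjDiagonal (W : Matrix m m 𝕜) (d : m → ℝ) : Matrix m m 𝕜 :=
  Wᴴ * diagonal (fun i => (d i : 𝕜)) * W

lemma conjDiagonal_posSemidef (W : Matrix m m 𝕜) {d : m → ℝ} (hd : 0 ≤ d) :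
    (W.conjDiagonal d).PosSemidef :=
  (PosSemidef.diagonal fun i => RCLike.ofReal_nonneg.2 (hd i)).conjTranspose_mul_mul_same W

lemma conjDiagonal_add (W : Matrix m m 𝕜) (d e : m → ℝ) :
    W.conjDiagonal (d + e) = W.conjDiagonal d + W.conjDiagonal e := by
  simp only [conjDiagonal, Pi.add_apply, RCLike.ofReal_add, ← diagonal_add, Matrix.mul_add,
    Matrix.add_mul]

lemma conjDiagonal_sub (W : Matrix m m 𝕜) (d e : m → ℝ) :
    W.conjDiagonal (d - e) = W.conjDiagonal d - W.conjDiagonal e := by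
  simp only [conjDiagonal, Pi.sub_apply, RCLike.ofReal_sub, ← diagonal_sub, Matrix.mul_sub,
    Matrix.sub_mul]

lemma conjDiagonal_smul (W : Matrix m m 𝕜) (c : ℝ) (d : m → ℝ) :
    W.conjDiagonal (c • d) = (c : 𝕜) • W.conjDiagonal d := by
  have : (fun i => ((c • d) i : 𝕜)) = (c : 𝕜) • fun i => (d i : 𝕜) := by ext; simp
  rw [conjDiagonal, this, diagonal_smul, Matrix.mul_smul, Matrix.smul_mul, conjDiagonal]

lemma conjDiagonal_one (W : Matrix m m 𝕜) : W.conjDiagonal 1 = Wᴴ * W := by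
  simp [conjDiagonal]

lemma conjDiagonal_one_of_mem_unitaryGroup {U : Matrix m m 𝕜} (hU : U ∈ unitaryGroup m 𝕜)
    (X : Matrix m m 𝕜) :
    (Uᴴ * X).conjDiagonal 1 = Xᴴ * X := by
  rw [conjDiagonal_one, conjTranspose_mul, conjTranspose_conjTranspose, Matrix.mul_assoc,
    ← Matrix.mul_assoc U, show U * Uᴴ = 1 from mem_unitaryGroup_iff.1 hU, Matrix.one_mul]

lemma inv_conjDiagonal (W : Matrix m m 𝕜) {d : m → ℝ} (hd : ∀ i, d i ≠ 0) :
    (W.conjDiagonal d)⁻¹ = W⁻¹ᴴ.conjDiagonal d⁻¹ := by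
  have hd' : ∀ i, (d i : 𝕜) ≠ 0 := fun i => RCLike.ofReal_ne_zero.2 (hd i)
  rw [conjDiagonal, conjDiagonal, mul_inv_rev, mul_inv_rev, inv_diagonal_of_ne_zero hd']
  simp only [conjTranspose_conjTranspose, conjTranspose_nonsing_inv, Pi.inv_def,
    RCLike.ofReal_inv, Matrix.mul_assoc]

lemma posSemidef_arith_mean_sub_conjDiagonal_rpow (W : Matrix m m 𝕜) {ν : ℝ} (h0 : 0 ≤ ν)
    (h1 : ν ≤ 1) {d : m → ℝ} (hd : 0 ≤ d) :
    (((1 - ν : ℝ) : 𝕜) • W.conjDiagonal 1 + (ν : 𝕜) • W.conjDiagonal d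
      - W.conjDiagonal (fun i => d i ^ ν)).PosSemidef := by
  rw [← conjDiagonal_smul, ← conjDiagonal_smul, ← conjDiagonal_add, ← conjDiagonal_sub]
  refine conjDiagonal_posSemidef W fun i => ?_
  have := Real.rpow_le_one_sub_add_mul h0 h1 (hd i)
  simp only [Pi.sub_apply, Pi.add_apply, Pi.smul_apply, Pi.one_apply, Pi.zero_apply, smul_eq_mul,
    mul_one]
  linarith

lemma posSemidef_conjDiagonal_rpow_sub_harm_mean {W : Matrix m m 𝕜}
    (hW : IsUnit W) {ν : ℝ} (h0 : 0 ≤ ν) (h1 : ν ≤ 1) {d : m → ℝ} (hd : ∀ i, 0 < d i) :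
    (W.conjDiagonal (fun i => d i ^ ν) - (((1 - ν : ℝ) : 𝕜) • (W.conjDiagonal 1)⁻¹
      + (ν : 𝕜) • (W.conjDiagonal d)⁻¹)⁻¹).PosSemidef := by
  have hmean : ∀ i, 0 < ((1 - ν) • (1 : m → ℝ)⁻¹ + ν • d⁻¹) i := fun i => by
    simp only [Pi.add_apply, Pi.smul_apply, Pi.inv_apply, Pi.one_apply, inv_one, smul_eq_mul,
      mul_one]
    have hdi := inv_pos.2 (hd i)
    exact (Real.rpow_pos_of_pos hdi ν).trans_le (Real.rpow_le_one_sub_add_mul h0 h1 hdi.le)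
  rw [inv_conjDiagonal (d := 1) W fun _ => one_ne_zero, inv_conjDiagonal W fun i => (hd i).ne',
    ← conjDiagonal_smul, ← conjDiagonal_smul, ← conjDiagonal_add,
    inv_conjDiagonal _ fun i => (hmean i).ne', conjTranspose_nonsing_inv,
    conjTranspose_conjTranspose, nonsing_inv_nonsing_inv _ ((isUnit_iff_isUnit_det _).1 hW),
    ← conjDiagonal_sub]
  refine conjDiagonal_posSemidef W fun i => ?_
  have := Real.inv_one_sub_add_mul_inv_le_rpow h0 h1 (hd i)
  simp only [Pi.sub_apply, Pi.add_apply, Pi.smul_apply, Pi.inv_apply, Pi.one_apply, Pi.zero_apply,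
    smul_eq_mul, inv_one, mul_one]
  linarith

end Matrix

namespace Matrix.IsHermitian

variable {n : ℕ} {M : Matrix (Fin n) (Fin n) ℂ} (hM : M.IsHermitian) (X : Matrix (Fin n) (Fin n) ℂ)
include hM

lemma conjTranspose_mul_hrpow_mul (r : ℝ) :
    Xᴴ * M.hrpow r * X =
      ((hM.eigenvectorUnitary : Matrix (Fin n) (Fin n) ℂ)ᴴ * X).conjDiagonal
        (fun i => hM.eigenvalues i ^ r) := by
  simp only [hrpow, dif_pos hM, conjDiagonal, conjTranspose_mul, conjTranspose_conjTranspose,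
    Matrix.mul_assoc]
  rfl

lemma conjTranspose_mul_mul :
    Xᴴ * M * X =
      ((hM.eigenvectorUnitary : Matrix (Fin n) (Fin n) ℂ)ᴴ * X).conjDiagonal hM.eigenvalues := by
  conv_lhs => rw [hM.spectral_theorem, Unitary.conjStarAlgAut_apply]
  simp only [conjDiagonal, conjTranspose_mul, conjTranspose_conjTranspose, star_eq_conjTranspose,
    Function.comp_def, Matrix.mul_assoc]

end Matrix.IsHermitian

theorem stmt_16 {n : ℕ} (X Y : Matrix (Fin n) (Fin n) ℂ)
    (hX : IsUnit X) (hY : IsUnit Y) {ν : ℝ} (hν : ν ∈ Set.Icc (0:ℝ) 1) :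
    (((1 - ν : ℝ) : ℂ) • (Xᴴ * X) + ((ν : ℝ) : ℂ) • (Yᴴ * Y)
        - X.qgmean Y ν).PosSemidef ∧
      (X.qgmean Y ν -
        (((1 - ν : ℝ) : ℂ) • (Xᴴ * X)⁻¹ + ((ν : ℝ) : ℂ) • (Yᴴ * Y)⁻¹)⁻¹).PosSemidef := by
  obtain ⟨hν0, hν1⟩ := hν
  have hM : ((Y * X⁻¹)ᴴ * (Y * X⁻¹)).PosDef := PosDef.conjTranspose_mul_self _ <|
    mulVec_injective_iff_isUnit.2 (hY.mul (isUnit_nonsing_inv_iff.2 hX))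
  set U := hM.1.eigenvectorUnitary
  set W := (U : Matrix (Fin n) (Fin n) ℂ)ᴴ * X
  have hXX : Xᴴ * X = W.conjDiagonal 1 := (conjDiagonal_one_of_mem_unitaryGroup U.2 X).symm
  have hYY : Yᴴ * Y = W.conjDiagonal hM.1.eigenvalues := by
    rw [← hM.1.conjTranspose_mul_mul X, ← Matrix.mul_assoc, ← conjTranspose_mul, Matrix.mul_assoc,
      nonsing_inv_mul_cancel_right _ _ ((isUnit_iff_isUnit_det _).1 hX)]
  have hQ : X.qgmean Y ν = W.conjDiagonal fun i => hM.1.eigenvalues i ^ ν :=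
    hM.1.conjTranspose_mul_hrpow_mul X ν
  have hW : IsUnit W := (isUnit_star.2 Unitary.isUnit_coe).mul hX
  rw [hXX, hYY, hQ]
  exact ⟨posSemidef_arith_mean_sub_conjDiagonal_rpow W hν0 hν1
      fun i => (hM.eigenvalues_pos i).le,
    posSemidef_conjDiagonal_rpow_sub_harm_mean hW hν0 hν1 hM.eigenvalues_pos⟩
end
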